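/- arXiv:2303.04746 — 2 statements merged into one kernel-verified Lean document; each statement's English description precedes it below -/
import Mathlib

section
/- Let N ≥ 1 and let Φ : ℝ^N → ℝ be a convex function, and let w* ∈ Ω. Then w* minimizes Φ over Ω (i.e., Φ(w*) ≤ Φ(w) for all w ∈ Ω) if and only if there exists g ∈ ∂Φ(w*) such that gᵀ(w* − e_i) ≤ 0 for every i = 1, …, N. -/
open Finset Matrix

noncomputable section

/-- Dot product of two real vectors indexed by a finite type. -/
def dotp {α : Type*} [Fintype α] (g w : α → ℝ) : ℝ := ∑ i, g i * w i

/-- The probability simplex Ω in ℝ^N. -/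
def simplex (N : ℕ) : Set (Fin N → ℝ) := {w | (∑ i, w i) = 1 ∧ ∀ i, 0 ≤ w i}

/-- The subdifferential of a convex function `Φ : ℝ^N → ℝ` at `w`. -/
def subdiff {N : ℕ} (Φ : (Fin N → ℝ) → ℝ) (w : Fin N → ℝ) : Set (Fin N → ℝ) :=
  {g | ∀ w', dotp g (w' - w) ≤ Φ w' - Φ w}

/-- The i-th standard basis vector of ℝ^N. -/
def stdBasis {N : ℕ} (i : Fin N) : Fin N → ℝ := fun j => if j = i then 1 else 0

lemma simplex_convex (N : ℕ) : Convex ℝ (simplex N) := by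
  have : simplex N = stdSimplex ℝ (Fin N) := by
    ext w; exact ⟨fun h => ⟨h.2, h.1⟩, fun h => ⟨h.2, h.1⟩⟩
  rw [this]; exact convex_stdSimplex ℝ _

lemma stdBasis_mem {N : ℕ} (i : Fin N) : _root_.stdBasis i ∈ simplex N := by
  constructor
  · simp [_root_.stdBasis]
  · intro j; unfold _root_.stdBasis; split <;> norm_num

lemma sum_single {N : ℕ} (v : Fin N → ℝ) : v = ∑ i, v i • _root_.stdBasis i := by
  funext j
  simp only [Finset.sum_apply, Pi.smul_apply, _root_.stdBasis, smul_eq_mul, mul_ite, mul_one,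
    mul_zero]
  simp

/-- `w*` minimizes a convex `Φ` over the simplex iff some subgradient `g` at `w*`
satisfies `gᵀ(w* − e_i) ≤ 0` for all `i`. -/
theorem stmt0 {N : ℕ} (hN : 1 ≤ N) (Φ : (Fin N → ℝ) → ℝ)
    (hΦ : ConvexOn ℝ Set.univ Φ) (ws : Fin N → ℝ) (hws : ws ∈ simplex N) :
    (∀ w ∈ simplex N, Φ ws ≤ Φ w) ↔
      ∃ g ∈ subdiff Φ ws, ∀ i : Fin N, dotp g (ws - stdBasis i) ≤ 0 := by
  constructor
  · -- hard direction: separation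
    intro hmin
    set c := Φ ws with hc
    set A : Set ((Fin N → ℝ) × ℝ) := {p | Φ p.1 - c < p.2} with hA
    set B : Set ((Fin N → ℝ) × ℝ) := (simplex N) ×ˢ Set.Iic (0 : ℝ) with hB
    have hΦc : ConvexOn ℝ (Set.univ : Set (Fin N → ℝ)) (fun w => Φ w - c) :=
      hΦ.sub (concaveOn_const c convex_univ)
    have hAconv : Convex ℝ A := by
      have := hΦc.convex_strict_epigraph
      convert this using 1
      ext p; simp [hA]
    have hΦcont : Continuous Φ := by
      exact continuousOn_univ.mp (hΦ.continuousOn isOpen_univ)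
    have hAopen : IsOpen A := by
      have : A = {p : (Fin N → ℝ) × ℝ | Φ p.1 - c < p.2} := rfl
      rw [this]
      exact isOpen_lt (by fun_prop) continuous_snd
    have hBconv : Convex ℝ B := (simplex_convex N).prod (convex_Iic 0)
    have hdisj : Disjoint A B := by
      rw [Set.disjoint_left]
      rintro ⟨w, t⟩ hA' ⟨hw, ht⟩
      have h1 : Φ ws ≤ Φ w := hmin w hw
      have : Φ w - c < t := hA'
      simp only [Set.mem_Iic] at ht
      linarith
    obtain ⟨f, u, hfA, hfB⟩ := geometric_hahn_banach_open hAconv hAopen hBconv hdisj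
    set s : ℝ := f (0, 1) with hs
    have hsplit : ∀ (w : Fin N → ℝ) (t : ℝ), f (w, t) = f (w, 0) + t * s := by
      intro w t
      have : (w, t) = (w, (0:ℝ)) + t • ((0 : Fin N → ℝ), (1:ℝ)) := by
        simp [Prod.ext_iff]
      rw [this, map_add, f.map_smul, smul_eq_mul]
    -- points of A at ws
    have hAws : ∀ ε : ℝ, 0 < ε → f (ws, 0) + ε * s < u := by
      intro ε hε
      have : ((ws, ε) : (Fin N → ℝ) × ℝ) ∈ A := by
        simp [hA, hc, hε]
      have := hfA _ this
      rwa [hsplit] at this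
    have hBws : u ≤ f (ws, 0) := by
      have : ((ws, (0:ℝ)) : (Fin N → ℝ) × ℝ) ∈ B := ⟨hws, by simp⟩
      have := hfB _ this
      rwa [hsplit, mul_comm, mul_zero, add_zero] at this
    have hsneg : s < 0 := by
      rcases lt_or_ge s 0 with h | h; · exact h
      have h1 := hAws 1 one_pos
      nlinarith
    -- key limit estimate
    have hkey : ∀ w' : Fin N → ℝ, f (w', 0) + (Φ w' - c) * s ≤ u := by
      intro w'
      refine le_of_forall_pos_lt_add fun δ hδ => ?_
      have hε : 0 < δ / (-s) := div_pos hδ (by linarith)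
      have hmem : ((w', Φ w' - c + δ / (-s)) : (Fin N → ℝ) × ℝ) ∈ A := by
        simp only [hA, Set.mem_setOf_eq]
        linarith
      have := hfA _ hmem
      rw [hsplit] at this
      have hne : s ≠ 0 := ne_of_lt hsneg
      have : f (w', 0) + (Φ w' - c) * s + (δ / (-s)) * s < u := by linarith [this]
      have heq : (δ / (-s)) * s = -δ := by
        rw [div_mul_eq_mul_div, div_neg, mul_div_assoc, div_self hne, mul_one]
      linarith [heq ▸ this]
    -- define g
    set g : Fin N → ℝ := fun i => f (stdBasis i, 0) / (-s) with hg
    have hdotp : ∀ v : Fin N → ℝ, dotp g v = f (v, 0) / (-s) := by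
      intro v
      have hv : ((v, (0:ℝ)) : (Fin N → ℝ) × ℝ) = ∑ i, v i • ((_root_.stdBasis i, (0:ℝ))) := by
        rw [Prod.ext_iff]
        constructor
        · rw [Prod.fst_sum]
          simpa using sum_single v
        · rw [Prod.snd_sum]
          simp
      rw [hv, map_sum, dotp]
      rw [Finset.sum_div]
      congr 1; funext i
      rw [f.map_smul]
      simp only [hg, smul_eq_mul]
      ring
    have hspos : 0 < -s := by linarith
    refine ⟨g, ?_, ?_⟩
    · intro w'
      rw [dotp] at *
      have h1 := hkey w'
      have h2 : f ((w' - ws : Fin N → ℝ), (0:ℝ)) = f (w', 0) - f (ws, 0) := by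
        have : ((w' - ws : Fin N → ℝ), (0:ℝ)) = ((w', (0:ℝ)) : (Fin N → ℝ) × ℝ) - (ws, 0) := by
          simp [Prod.ext_iff]
        rw [this, map_sub]
      have := hdotp (w' - ws)
      rw [dotp] at this
      rw [this, h2, div_le_iff₀ hspos]
      nlinarith [hBws, h1]
    · intro i
      have hBi : u ≤ f (stdBasis i, 0) := by
        have : ((stdBasis i, (0:ℝ)) : (Fin N → ℝ) × ℝ) ∈ B := ⟨stdBasis_mem i, by simp⟩
        have := hfB _ this
        rwa [hsplit, mul_comm, mul_zero, add_zero] at this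
      have h1 := hkey ws
      have h1' : f (ws, 0) ≤ u := by
        simpa [hc] using h1
      have h2 : f ((ws - stdBasis i : Fin N → ℝ), (0:ℝ)) = f (ws, 0) - f (stdBasis i, 0) := by
        have : ((ws - stdBasis i : Fin N → ℝ), (0:ℝ))
            = ((ws, (0:ℝ)) : (Fin N → ℝ) × ℝ) - (stdBasis i, 0) := by
          simp [Prod.ext_iff]
        rw [this, map_sub]
      rw [hdotp, h2, div_nonpos_iff]
      right
      constructor <;> linarith
  · -- easy direction
    rintro ⟨g, hg, hK⟩ w hw
    have hsub := hg w
    have hDle : ∀ i, dotp g ws ≤ g i := by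
      intro i
      have := hK i
      rw [dotp] at this ⊢
      have heq : ∑ j, g j * (ws - _root_.stdBasis i) j = (∑ j, g j * ws j) - g i := by
        have h3 : ∀ j ∈ Finset.univ, g j * (ws - _root_.stdBasis i) j
            = g j * ws j - (if j = i then g j else 0) := by
          intro j _
          simp only [Pi.sub_apply, _root_.stdBasis, mul_sub]
          split <;> simp
        rw [Finset.sum_congr rfl h3, Finset.sum_sub_distrib,
          Finset.sum_ite_eq' Finset.univ i g]
        simp
      rw [heq] at this
      linarith
    have hpos : 0 ≤ dotp g (w - ws) := by
      rw [dotp]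
      have heq : ∑ j, g j * (w - ws) j = (∑ j, g j * w j) - dotp g ws := by
        rw [dotp, ← Finset.sum_sub_distrib]
        congr 1; funext j; simp [mul_sub]
      rw [heq, sub_nonneg]
      calc dotp g ws = dotp g ws * ∑ j, w j := by rw [hw.1, mul_one]
        _ = ∑ j, dotp g ws * w j := by rw [Finset.mul_sum]
        _ ≤ ∑ j, g j * w j := by
            apply Finset.sum_le_sum
            intro j _
            exact mul_le_mul_of_nonneg_right (hDle j) (hw.2 j)
    linarith
end
end

section
/- For each k = 1, …, K, let z_{k,1}, …, z_{k,N} ∈ ℝ^{q_k}, let I_k(w) = Σ_{i=1}^N w_i z_{k,i} z_{k,i}ᵀ, and let Φ_k(w) = φ_k(I_k(w)) where φ_k is a convex real-valued function on q_k×q_k matrices that is differentiable at I_k(w*). Let w* ∈ Ω and η_1, …, η_K ≥ 0. Then w* minimizes Σ_{k=1}^K η_k Φ_k over Ω if and only if Σ_{k=1}^K η_k d_k(i, w*) ≤ 0 for all i = 1, …, N, where d_k(i, w*) = trace(∇φ_k(I_k(w*))ᵀ (I_k(w*) − z_{k,i} z_{k,i}ᵀ)). -/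
/-!
The objective `Ψ w = Σ_k η_k φ_k (I_k w)` is convex, because each `I_k` is linear in `w` and
`η_k ≥ 0`, and it is differentiable at `w*` with derivative `D v = Σ_k η_k tr (G_kᵀ I_k v)`.
For a convex function on a convex set, `w*` is a minimizer iff `D (w - w*) ≥ 0` for every feasible
`w`: necessity is Fermat's rule along the segment, sufficiency the gradient inequality. On the
simplex `w - w* = Σ_i w_i (e_i - w*)`, so by linearity it suffices to test the vertices `e_i`,
and `D (e_i - w*) = -Σ_k η_k d_k(i, w*)`.
-/

open Finset Matrix

noncomputable section

attribute [local instance] Matrix.normedAddCommGroup Matrix.normedSpace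

/-- The information matrix `I(w) = Σ_i w_i z_i z_iᵀ`. -/
def infoMat {N q : ℕ} (z : Fin N → Fin q → ℝ) (w : Fin N → ℝ) :
    Matrix (Fin q) (Fin q) ℝ := ∑ i, w i • Matrix.vecMulVec (z i) (z i)

/-- The smallest eigenvalue of a (symmetric) real matrix `M`. -/
def lambdaMin {q : ℕ} (M : Matrix (Fin q) (Fin q) ℝ) : ℝ :=
  sInf {r : ℝ | ∃ v : Fin q → ℝ, v ≠ 0 ∧ M.mulVec v = r • v}

open Set

theorem ConvexOn.fun_sum {𝕜 E β ι : Type*} [Semiring 𝕜] [PartialOrder 𝕜] [AddCommMonoid E]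
    [AddCommMonoid β] [PartialOrder β] [IsOrderedAddMonoid β] [SMul 𝕜 E] [Module 𝕜 β]
    {s : Set E} {f : ι → E → β} (t : Finset ι) (hs : Convex 𝕜 s)
    (hf : ∀ i ∈ t, ConvexOn 𝕜 s (f i)) : ConvexOn 𝕜 s fun x => ∑ i ∈ t, f i x := by
  classical
  induction t using Finset.induction_on with
  | empty => simpa using convexOn_const 0 hs
  | insert a t ha ih =>
    simp only [Finset.sum_insert ha]
    exact (hf a (mem_insert_self a t)).add (ih fun i hi => hf i (mem_insert_of_mem hi))

section Convex

variable {E : Type*} [NormedAddCommGroup E] [NormedSpace ℝ E]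
  {s : Set E} {f : E → ℝ} {f' : E →L[ℝ] ℝ} {x y : E}

theorem ConvexOn.le_sub_of_hasFDerivAt (hf : ConvexOn ℝ s f) (hx : x ∈ s) (hy : y ∈ s)
    (hf' : HasFDerivAt f f' x) : f' (y - x) ≤ f y - f x := by
  set g : ℝ →ᵃ[ℝ] E := AffineMap.lineMap x y
  have hline : HasDerivAt (f ∘ g) (f' (y - x)) 0 :=
    (by simpa [g] using hf' : HasFDerivAt f f' (g 0)).comp_hasDerivAt 0
      AffineMap.hasDerivAt_lineMap
  simpa [g, slope_def_field] using (hf.comp_affineMap g).le_slope_of_hasDerivAt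
    (by simpa [g] using hx) (by simpa [g] using hy) zero_lt_one hline

theorem ConvexOn.isMinOn_iff_of_hasFDerivAt (hf : ConvexOn ℝ s f) (hx : x ∈ s)
    (hf' : HasFDerivAt f f' x) : IsMinOn f s x ↔ ∀ y ∈ s, 0 ≤ f' (y - x) := by
  refine ⟨fun hmin y hy => ?_, fun h => isMinOn_iff.2 fun y hy => ?_⟩
  · exact hmin.localize.hasFDerivWithinAt_nonneg hf'.hasFDerivWithinAt
      (sub_mem_posTangentConeAt_of_segment_subset (hf.1.segment_subset hx hy))
  · linarith [h y hy, hf.le_sub_of_hasFDerivAt hx hy hf']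

end Convex

section Simplex

variable {N : ℕ}

theorem simplex_eq_stdSimplex : simplex N = stdSimplex ℝ (Fin N) := by
  ext w
  exact and_comm

theorem convex_simplex : Convex ℝ (simplex N) :=
  simplex_eq_stdSimplex ▸ convex_stdSimplex ℝ (Fin N)

theorem stdBasis_eq_pi_single (i : Fin N) : _root_.stdBasis i = Pi.single i 1 := by
  ext j
  simp [_root_.stdBasis, Pi.single_apply]

theorem stdBasis_mem_simplex (i : Fin N) : _root_.stdBasis i ∈ simplex N := by
  rw [simplex_eq_stdSimplex, stdBasis_eq_pi_single]
  exact single_mem_stdSimplex ℝ i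

theorem sum_smul_stdBasis_sub (w v : Fin N → ℝ) (hw : ∑ i, w i = 1) :
    ∑ i, w i • (_root_.stdBasis i - v) = w - v := by
  ext j
  simp [_root_.stdBasis, mul_sub, sum_sub_distrib, ← sum_mul, hw]

theorem forall_mem_simplex_nonneg_iff {F : Type*} [FunLike F (Fin N → ℝ) ℝ]
    [LinearMapClass F ℝ (Fin N → ℝ) ℝ] (ℓ : F) (v : Fin N → ℝ) :
    (∀ w ∈ simplex N, 0 ≤ ℓ (w - v)) ↔ ∀ i, 0 ≤ ℓ (_root_.stdBasis i - v) := by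
  refine ⟨fun h i => h _ (stdBasis_mem_simplex i), fun h w hw => ?_⟩
  rw [← sum_smul_stdBasis_sub w v hw.1, map_sum]
  exact sum_nonneg fun i _ => by rw [map_smul, smul_eq_mul]; exact mul_nonneg (hw.2 i) (h i)

end Simplex

section InfoMat

variable {N q : ℕ} (z : Fin N → Fin q → ℝ)

def infoMatCLM : (Fin N → ℝ) →L[ℝ] Matrix (Fin q) (Fin q) ℝ :=
  ∑ i, (ContinuousLinearMap.proj i).smulRight (vecMulVec (z i) (z i))

@[simp]
theorem infoMatCLM_apply (w : Fin N → ℝ) : infoMatCLM z w = infoMat z w := by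
  simp [infoMatCLM, infoMat]

theorem infoMat_sub (w v : Fin N → ℝ) : infoMat z (w - v) = infoMat z w - infoMat z v := by
  simp only [← infoMatCLM_apply, map_sub]

theorem infoMat_stdBasis (i : Fin N) : infoMat z (_root_.stdBasis i) = vecMulVec (z i) (z i) := by
  simp [infoMat, _root_.stdBasis, ite_smul]

theorem ConvexOn.comp_infoMat {φ : Matrix (Fin q) (Fin q) ℝ → ℝ} (hφ : ConvexOn ℝ univ φ) :
    ConvexOn ℝ univ fun w => φ (infoMat z w) := by
  simpa [Function.comp_def] using hφ.comp_linearMap (infoMatCLM z).toLinearMap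

theorem HasFDerivAt.comp_infoMat {φ : Matrix (Fin q) (Fin q) ℝ → ℝ}
    {L : Matrix (Fin q) (Fin q) ℝ →L[ℝ] ℝ} {w : Fin N → ℝ} (hφ : HasFDerivAt φ L (infoMat z w)) :
    HasFDerivAt (fun w => φ (infoMat z w)) (L.comp (infoMatCLM z)) w := by
  rw [← infoMatCLM_apply] at hφ
  have h := hφ.comp w (infoMatCLM z).hasFDerivAt
  simp only [Function.comp_def, infoMatCLM_apply] at h
  exact h

end InfoMat

/-- with `Φ_k(w) = φ_k(I_k(w))`, each `φ_k` convex and differentiable at `I_k(w*)`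
with gradient matrix `G k`, and multipliers `η_k ≥ 0`:  `w*` minimizes `Σ_k η_k Φ_k` over the
simplex iff `Σ_k η_k d_k(i, w*) ≤ 0` for all `i`, where
`d_k(i, w*) = trace(∇φ_k(I_k(w*))ᵀ (I_k(w*) − z_{k,i} z_{k,i}ᵀ))`. -/
theorem stmt11 {N K : ℕ} (q : Fin K → ℕ)
    (z : ∀ k : Fin K, Fin N → Fin (q k) → ℝ)
    (φ : ∀ k : Fin K, Matrix (Fin (q k)) (Fin (q k)) ℝ → ℝ)
    (hφconv : ∀ k, ConvexOn ℝ Set.univ (φ k))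
    (ws : Fin N → ℝ) (hws : ws ∈ simplex N)
    (L : ∀ k : Fin K, Matrix (Fin (q k)) (Fin (q k)) ℝ →L[ℝ] ℝ)
    (hdiff : ∀ k, HasFDerivAt (φ k) (L k) (infoMat (z k) ws))
    (G : ∀ k : Fin K, Matrix (Fin (q k)) (Fin (q k)) ℝ)
    (hG : ∀ k, ∀ H : Matrix (Fin (q k)) (Fin (q k)) ℝ, L k H = Matrix.trace ((G k)ᵀ * H))
    (η : Fin K → ℝ) (hη : ∀ k, 0 ≤ η k) :
    (∀ w ∈ simplex N,
        (∑ k, η k * φ k (infoMat (z k) ws)) ≤ ∑ k, η k * φ k (infoMat (z k) w)) ↔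
      ∀ i : Fin N,
        (∑ k, η k * Matrix.trace ((G k)ᵀ *
          (infoMat (z k) ws - Matrix.vecMulVec (z k i) (z k i)))) ≤ 0 := by
  set Ψ : (Fin N → ℝ) → ℝ := fun w => ∑ k, η k * φ k (infoMat (z k) w)
  set D : (Fin N → ℝ) →L[ℝ] ℝ := ∑ k, η k • (L k).comp (infoMatCLM (z k))
  have hΨ : ConvexOn ℝ (simplex N) Ψ :=
    ConvexOn.fun_sum _ convex_simplex fun k _ =>
      (((hφconv k).comp_infoMat (z k)).subset (subset_univ _) convex_simplex).smul (hη k)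
  have hD : HasFDerivAt Ψ D ws :=
    HasFDerivAt.fun_sum fun k _ => ((hdiff k).comp_infoMat (z k)).const_mul (η k)
  have hD_vertex : ∀ i : Fin N, D (_root_.stdBasis i - ws) = -∑ k, η k * Matrix.trace ((G k)ᵀ *
      (infoMat (z k) ws - Matrix.vecMulVec (z k i) (z k i))) := fun i => by
    simp [D, infoMat_sub, infoMat_stdBasis, ← hG, mul_sub]
  change (∀ w ∈ simplex N, Ψ ws ≤ Ψ w) ↔ _
  rw [← isMinOn_iff, hΨ.isMinOn_iff_of_hasFDerivAt hws hD, forall_mem_simplex_nonneg_iff]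
  simp only [hD_vertex, neg_nonneg]
end
end
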